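/- arXiv:2605.31353 — 2 statements merged into one kernel-verified Lean document; each statement's English description precedes it below -/
import Mathlib

section
/- The function h(x) = x / ((1 − x²)·artanh(x)) is strictly increasing on the open interval (0, 1). -/
/-- The inverse hyperbolic tangent, `artanh(x) = (1/2)·log((1+x)/(1−x))` for `|x| < 1`. -/
noncomputable def artanh (x : ℝ) : ℝ := (1 / 2) * Real.log ((1 + x) / (1 - x))

lemma artanh_hasDerivAt {x : ℝ} (h1 : -1 < x) (h2 : x < 1) :
    HasDerivAt artanh (1 / (1 - x ^ 2)) x := by
  have hx1 : (0:ℝ) < 1 + x := by linarith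
  have hx2 : (0:ℝ) < 1 - x := by linarith
  have d1 : HasDerivAt (fun y : ℝ => Real.log (1 + y)) (1 / (1 + x)) x := by
    simpa using (((hasDerivAt_id x).const_add 1).log hx1.ne')
  have d2 : HasDerivAt (fun y : ℝ => Real.log (1 - y)) (-1 / (1 - x)) x := by
    simpa using (((hasDerivAt_id x).const_sub 1).log hx2.ne')
  have d : HasDerivAt (fun y : ℝ => (1/2 : ℝ) * (Real.log (1 + y) - Real.log (1 - y)))
      ((1/2 : ℝ) * (1 / (1 + x) - (-1 / (1 - x)))) x := (d1.sub d2).const_mul _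
  have heq : (fun y : ℝ => (1/2 : ℝ) * (Real.log (1 + y) - Real.log (1 - y))) =ᶠ[nhds x] artanh := by
    filter_upwards [Ioo_mem_nhds h1 h2] with y hy
    have hy1 : (0:ℝ) < 1 + y := by linarith [hy.1]
    have hy2 : (0:ℝ) < 1 - y := by linarith [hy.2]
    rw [artanh, Real.log_div hy1.ne' hy2.ne']
  have := d.congr_of_eventuallyEq heq.symm
  refine this.congr_deriv ?_
  have h1' : (1+x) ≠ 0 := hx1.ne'
  have h2' : (1-x) ≠ 0 := hx2.ne'
  have h3' : (1-x^2) ≠ 0 := by nlinarith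
  field_simp
  ring

lemma artanh_pos {x : ℝ} (h1 : 0 < x) (h2 : x < 1) : 0 < artanh x := by
  apply mul_pos (by norm_num)
  apply Real.log_pos
  rw [lt_div_iff₀ (by linarith)]
  linarith

lemma artanh_zero : artanh 0 = 0 := by simp [artanh]

lemma key {x : ℝ} (h1 : 0 < x) (h2 : x < 1) : 0 < (1 + x ^ 2) * artanh x - x := by
  set ψ : ℝ → ℝ := fun y => (1 + y ^ 2) * artanh y - y with hψ
  have hd : ∀ y ∈ Set.Ioo (0:ℝ) 1,
      HasDerivAt ψ (2 * y * artanh y + (1 + y ^ 2) * (1 / (1 - y ^ 2)) - 1) y := by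
    intro y hy
    have := ((((hasDerivAt_id y).pow 2).const_add 1).mul
      (artanh_hasDerivAt (by linarith [hy.1]) hy.2)).sub (hasDerivAt_id y)
    refine this.congr_deriv ?_
    simp only [id_eq, Pi.pow_apply]
    ring
  have hmono : StrictMonoOn ψ (Set.Ico (0:ℝ) 1) := by
    apply strictMonoOn_of_deriv_pos (convex_Ico 0 1)
    · -- continuity
      intro y hy
      rcases eq_or_lt_of_le hy.1 with h | h
      · -- y = 0 : continuity at 0; artanh continuous there too
        subst h
        exact ((hasDerivAt_id (0:ℝ)).pow 2 |>.const_add 1 |>.mul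
          (artanh_hasDerivAt (by norm_num) hy.2) |>.sub (hasDerivAt_id _)).continuousAt.continuousWithinAt
      · exact (hd y ⟨h, hy.2⟩).continuousAt.continuousWithinAt
    · intro y hy
      rw [interior_Ico] at hy
      rw [(hd y hy).deriv]
      have hy2 : 0 < 1 - y ^ 2 := by nlinarith [hy.1, hy.2]
      have h3 : 0 < 2 * y * artanh y := by
        exact mul_pos (by linarith [hy.1]) (artanh_pos hy.1 hy.2)
      have h4 : (1:ℝ) < (1 + y ^ 2) * (1 / (1 - y ^ 2)) := by
        rw [mul_one_div, lt_div_iff₀ hy2]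
        nlinarith [hy.1]
      linarith
  have := hmono (Set.left_mem_Ico.2 one_pos) ⟨le_of_lt h1, h2⟩ h1
  simpa [ψ, artanh_zero] using this

/-- `h(x) = x / ((1 − x²)·artanh(x))` is strictly increasing on `(0, 1)`. -/
theorem stmt4 :
    StrictMonoOn (fun x : ℝ => x / ((1 - x ^ 2) * artanh x)) (Set.Ioo 0 1) := by
  have hg : ∀ x ∈ Set.Ioo (0:ℝ) 1, (1 - x ^ 2) * artanh x ≠ 0 := by
    intro x hx
    have : 0 < 1 - x ^ 2 := by nlinarith [hx.1, hx.2]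
    exact (mul_pos this (artanh_pos hx.1 hx.2)).ne'
  have hd : ∀ x ∈ Set.Ioo (0:ℝ) 1,
      HasDerivAt (fun x : ℝ => x / ((1 - x ^ 2) * artanh x))
        ((1 * ((1 - x ^ 2) * artanh x) - x * ((-(2*x)) * artanh x + (1 - x ^ 2) * (1 / (1 - x ^ 2)))) /
          ((1 - x ^ 2) * artanh x) ^ 2) x := by
    intro x hx
    have dg : HasDerivAt (fun y : ℝ => (1 - y ^ 2) * artanh y)
        ((-(2*x)) * artanh x + (1 - x ^ 2) * (1 / (1 - x ^ 2))) x := by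
      have := (((hasDerivAt_id x).pow 2).const_sub 1).mul
        (artanh_hasDerivAt (by linarith [hx.1]) hx.2)
      refine this.congr_deriv ?_
      simp only [id_eq, Pi.pow_apply]
      ring
    exact (hasDerivAt_id x).div dg (hg x hx)
  apply strictMonoOn_of_deriv_pos (convex_Ioo 0 1)
  · exact fun x hx => (hd x hx).continuousAt.continuousWithinAt
  · intro x hx
    rw [interior_Ioo] at hx
    rw [(hd x hx).deriv]
    have hx2 : (0:ℝ) < 1 - x ^ 2 := by nlinarith [hx.1, hx.2]
    have hnum : 0 < 1 * ((1 - x ^ 2) * artanh x) -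
        x * ((-(2*x)) * artanh x + (1 - x ^ 2) * (1 / (1 - x ^ 2))) := by
      have := key hx.1 hx.2
      have h5 : (1 - x ^ 2) * (1 / (1 - x ^ 2)) = 1 := by field_simp
      rw [h5]
      nlinarith
    have hgp : 0 < (1 - x ^ 2) * artanh x := mul_pos hx2 (artanh_pos hx.1 hx.2)
    exact div_pos hnum (by positivity)
end

section
/- Let A ⊆ ℝ² be a compact connected set. Then every point of the convex hull of A can be written as a convex combination of at most two points of A. -/
open Complex Set

lemma span_half (B : Set ℂ) {z : ℂ} (hz : z ∈ convexHull ℝ B) (v : ℂ) :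
    ∃ x ∈ B, ((x - z) * v).re ≤ 0 := by
  by_contra h
  push_neg at h
  have hlin : IsLinearMap ℝ (fun x : ℂ => (x * v).re) :=
    ⟨fun a b => by simp [add_mul], fun c x => by
      simp [Complex.real_smul, mul_assoc, Complex.re_ofReal_mul]⟩
  have hconv : Convex ℝ {x : ℂ | (z * v).re < (x * v).re} :=
    convex_halfSpace_gt hlin _
  have hsub : B ⊆ {x : ℂ | (z * v).re < (x * v).re} := by
    intro x hx
    have h2 := h x hx
    rw [sub_mul, Complex.sub_re] at h2
    exact sub_pos.mp h2
  have h3 := hconv.convexHull_subset_iff.mpr hsub hz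
  simp only [Set.mem_setOf_eq] at h3
  exact lt_irrefl _ h3

lemma pair_done (B : Set ℂ) {z a b : ℂ} (ha : a ∈ B) (hb : b ∈ B) {r : ℝ}
    (hr : 0 < r) (hab : b - z = -(r • (a - z))) :
    ∃ a ∈ B, ∃ b ∈ B, ∃ t ∈ Set.Icc (0 : ℝ) 1, z = t • a + (1 - t) • b := by
  have h1r : (0:ℝ) < 1 + r := by linarith
  refine ⟨a, ha, b, hb, r / (1 + r), ⟨by positivity, by
    rw [div_le_one h1r]; linarith⟩, ?_⟩
  have h1 : ((1 + r : ℝ) : ℂ) ≠ 0 := Complex.ofReal_ne_zero.mpr h1r.ne'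
  simp only [Complex.real_smul] at hab ⊢
  push_cast at hab h1 ⊢
  field_simp
  linear_combination -hab

lemma key_s15 (B : Set ℂ) (hc : IsCompact B) (hconn : IsConnected B) :
    ∀ z ∈ convexHull ℝ B, ∃ a ∈ B, ∃ b ∈ B, ∃ t ∈ Set.Icc (0 : ℝ) 1,
      z = t • a + (1 - t) • b := by
  intro z hz
  by_cases hzB : z ∈ B
  · exact ⟨z, hzB, z, hzB, 1/2, by norm_num, by
      simp only [Complex.real_smul]; push_cast; ring⟩
  have hne : ∀ x ∈ B, x - z ≠ 0 := fun x hx h => hzB (sub_eq_zero.mp h ▸ hx)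
  by_cases hdir : ∀ w : ℂ, ‖w‖ = 1 → ∃ x ∈ B, ∃ ρ : ℝ, 0 < ρ ∧ x - z = ρ • w
  · obtain ⟨a, ha⟩ := hconn.nonempty
    have habs : ‖a - z‖ ≠ 0 := norm_ne_zero_iff.mpr (hne a ha)
    have habs' : (0:ℝ) < ‖a - z‖ := lt_of_le_of_ne (by positivity) (Ne.symm habs)
    set w : ℂ := (‖a - z‖)⁻¹ • (a - z) with hwdef
    have hw : ‖w‖ = 1 := by
      rw [hwdef, norm_smul, norm_inv, norm_norm, inv_mul_cancel₀ habs]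
    obtain ⟨b, hb, ρ, hρ, hbz⟩ := hdir (-w) (by simpa using hw)
    apply pair_done B ha hb (r := ρ / ‖a - z‖) (by positivity)
    rw [hbz, smul_neg, hwdef, smul_smul, div_eq_mul_inv]
  · push_neg at hdir
    obtain ⟨w, hw1, hw2⟩ := hdir
    set c : ℂ := -((starRingEnd ℂ) w) with hcdef
    have hc0 : c ≠ 0 := by
      simp only [hcdef, neg_ne_zero, map_ne_zero]
      intro h; rw [h] at hw1; simp at hw1
    have hcw : c * (-w) = 1 := by
      rw [hcdef]
      have : (starRingEnd ℂ) w * w = ((‖w‖ : ℝ) : ℂ) ^ 2 := by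
        rw [mul_comm, Complex.mul_conj, Complex.normSq_eq_norm_sq]; push_cast; ring
      rw [neg_mul_neg, this, hw1]; norm_num
    have hinv : ∀ u : ℂ, u = (u * c) * (-w) := by
      intro u; rw [mul_assoc, hcw, mul_one]
    have slit : ∀ x ∈ B, (x - z) * c ∈ Complex.slitPlane := by
      intro x hx
      rw [Complex.mem_slitPlane_iff]
      by_contra hcon
      push_neg at hcon
      obtain ⟨hre, him⟩ := hcon
      have hne0 : (x - z) * c ≠ 0 := mul_ne_zero (hne x hx) hc0
      have heq : (x - z) * c = ((((x - z) * c).re : ℝ) : ℂ) := by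
        apply Complex.ext
        · simp
        · simpa using him
      have ht : ((x - z) * c).re < 0 := by
        rcases lt_or_eq_of_le hre with h | h
        · exact h
        · exact absurd (by rw [heq, h]; simp) hne0
      refine hw2 x hx (-((x - z) * c).re) (by linarith) ?_
      calc x - z = ((x - z) * c) * (-w) := hinv _
        _ = -((x - z) * c) * w := by ring
        _ = (-((x - z) * c).re : ℝ) • w := by
            rw [Complex.real_smul]; push_cast; rw [← heq]
      -- done
    set θ : ℂ → ℝ := fun x => ((x - z) * c).arg with hθdef
    have hcont : ContinuousOn θ B := by
      intro x hx
      apply ContinuousAt.continuousWithinAt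
      have h1 : ContinuousAt (fun y : ℂ => (y - z) * c) x := by fun_prop
      have h2 : ContinuousAt (Complex.arg ∘ fun y : ℂ => (y - z) * c) x :=
        ContinuousAt.comp (Complex.continuousAt_arg (slit x hx)) h1
      exact h2
    set K := θ '' B with hKdef
    have hKc : IsCompact K := hc.image_of_continuousOn hcont
    have hKconn : IsConnected K := hconn.image θ hcont
    have hKicc : K = Set.Icc (sInf K) (sSup K) := eq_Icc_of_connected_compact hKconn hKc
    set m := sInf K with hmdef
    set M := sSup K with hMdef
    have hmM : m ≤ M := csInf_le_csSup hKconn.nonempty hKc.bddBelow hKc.bddAbove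
    have habsx : ∀ x ∈ B, 0 < ‖(x - z) * c‖ := by
      intro x hx
      exact norm_pos_iff.mpr (mul_ne_zero (hne x hx) hc0)
    have hMm : m + Real.pi ≤ M := by
      by_contra hlt
      push_neg at hlt
      set mid := (m + M) / 2 with hmid
      obtain ⟨x, hx, hxle⟩ :=
        span_half B hz (c * (starRingEnd ℂ) (Complex.exp (mid * Complex.I)))
      have hxθ : θ x ∈ Set.Icc m M := by
        rw [← hKicc]; exact Set.mem_image_of_mem θ hx
      have hdecomp : (x - z) * c
          = ((‖(x - z) * c‖ : ℝ) : ℂ) * Complex.exp ((θ x : ℝ) * Complex.I) :=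
        (Complex.norm_mul_exp_arg_mul_I _).symm
      have hconj : (starRingEnd ℂ) (Complex.exp ((mid : ℝ) * Complex.I))
          = Complex.exp (-((mid : ℝ) * Complex.I)) := by
        rw [← Complex.exp_conj]; congr 1; simp
      have hang : (θ x : ℂ) * Complex.I + -((mid : ℝ) * Complex.I)
          = ((θ x - mid : ℝ) : ℂ) * Complex.I := by push_cast; ring
      have key1 : (x - z) * (c * (starRingEnd ℂ) (Complex.exp (mid * Complex.I)))
          = ((‖(x - z) * c‖ : ℝ) : ℂ)
            * Complex.exp (((θ x - mid : ℝ) : ℂ) * Complex.I) := by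
        rw [← mul_assoc, hconj]
        conv_lhs => rw [hdecomp]
        rw [mul_assoc, ← Complex.exp_add, hang]
      have hre : ((x - z) * (c * (starRingEnd ℂ) (Complex.exp (mid * Complex.I)))).re
          = ‖(x - z) * c‖ * Real.cos (θ x - mid) := by
        rw [key1, Complex.re_ofReal_mul, Complex.exp_ofReal_mul_I_re]
      have hcos : 0 < Real.cos (θ x - mid) := by
        apply Real.cos_pos_of_mem_Ioo
        constructor
        · simp only [hmid]
          nlinarith [hxθ.1, hxθ.2]
        · simp only [hmid]
          nlinarith [hxθ.1, hxθ.2]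
      rw [hre] at hxle
      nlinarith [habsx x hx, hcos]
    have hm : m ∈ K := by rw [hKicc]; exact Set.left_mem_Icc.mpr hmM
    have hmpi : m + Real.pi ∈ K := by
      rw [hKicc]; exact ⟨by linarith [Real.pi_pos], hMm⟩
    obtain ⟨a, ha, hθa⟩ := hm
    obtain ⟨b, hb, hθb⟩ := hmpi
    set ρa : ℝ := ‖(a - z) * c‖ with hradef
    set ρb : ℝ := ‖(b - z) * c‖ with hrbdef
    have hρa : 0 < ρa := habsx a ha
    have hρb : 0 < ρb := habsx b hb
    have hA : (a - z) * c
        = ((ρa : ℝ) : ℂ) * Complex.exp ((m : ℝ) * Complex.I) := by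
      conv_lhs => rw [← Complex.norm_mul_exp_arg_mul_I ((a - z) * c)]
      rw [show ((a - z) * c).arg = m from hθa]
    have hB : (b - z) * c
        = -(((ρb : ℝ) : ℂ) * Complex.exp ((m : ℝ) * Complex.I)) := by
      conv_lhs => rw [← Complex.norm_mul_exp_arg_mul_I ((b - z) * c)]
      rw [show ((b - z) * c).arg = m + Real.pi from hθb]
      have : Complex.exp (((m + Real.pi : ℝ) : ℂ) * Complex.I)
          = -Complex.exp ((m : ℝ) * Complex.I) := by
        push_cast
        rw [add_mul, Complex.exp_add, Complex.exp_pi_mul_I]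
        ring
      rw [this]; ring
    apply pair_done B ha hb (r := ρb / ρa) (div_pos hρb hρa)
    have e1 : b - z = ((b - z) * c) * (-w) := hinv _
    have e2 : a - z = ((a - z) * c) * (-w) := hinv _
    have hne' : ((ρa : ℝ) : ℂ) ≠ 0 := Complex.ofReal_ne_zero.mpr hρa.ne'
    rw [e1, e2, hA, hB, Complex.real_smul, Complex.ofReal_div]
    field_simp

/-- Fenchel–Eggleston: if `A ⊆ ℝ²` is compact and connected, then every
point of `conv(A)` is a convex combination of at most two points of `A`. -/
theorem stmt15 (A : Set (ℝ × ℝ)) (hc : IsCompact A) (hconn : IsConnected A) :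
    ∀ z ∈ convexHull ℝ A, ∃ a ∈ A, ∃ b ∈ A, ∃ t ∈ Set.Icc (0 : ℝ) 1,
      z = t • a + (1 - t) • b := by
  intro z hz
  set f := Complex.equivRealProdCLM with hfdef
  set B : Set ℂ := f.symm '' A with hBdef
  have hBc : IsCompact B := hc.image f.symm.continuous
  have hBconn : IsConnected B := hconn.image _ f.symm.continuous.continuousOn
  have hlin : IsLinearMap ℝ (⇑f.symm) := ⟨map_add _, map_smul _⟩
  have hzB : f.symm z ∈ convexHull ℝ B := by
    rw [hBdef, ← hlin.image_convexHull A]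
    exact Set.mem_image_of_mem _ hz
  obtain ⟨a', ha', b', hb', t, ht, hzab⟩ := key_s15 B hBc hBconn _ hzB
  obtain ⟨a, haA, rfl⟩ := ha'
  obtain ⟨b, hbA, rfl⟩ := hb'
  refine ⟨a, haA, b, hbA, t, ht, ?_⟩
  have h2 := congrArg f hzab
  rw [map_add, map_smul, map_smul, f.apply_symm_apply, f.apply_symm_apply,
    f.apply_symm_apply] at h2
  exact h2
end
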